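/- arXiv:2210.12159 — 5 statements merged into one kernel-verified Lean document; each statement's English description precedes it below -/
import Mathlib

section
/- For every non-negative integer n and every integer s, ∑_{k=0}^{⌊n/2⌋} C(n, 2k) * F(6k+s) = 2^(n-1) * (F(2n+s) + (-1)^n * F(n+s)); equivalently, 2 * ∑_{k=0}^{⌊n/2⌋} C(n, 2k) * F(6k+s) = 2^n * (F(2n+s) + (-1)^n * F(n+s)). -/
/-!
The recurrence gives `F s + F (s + 3) = 2 F (s + 2)` and `F s - F (s + 3) = -2 F (s + 1)`.
With `T` the shift `u ↦ u (· + 1)` they read `(1 + T³) F = 2 T² F` and `(1 - T³) F = -2 T F`,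
so raising the operators to the `n`-th power gives `∑ C(n, j) F (3j + s) = 2ⁿ F (2n + s)` and
`∑ (-1)ʲ C(n, j) F (3j + s) = (-2)ⁿ F (n + s)`. Adding the two sums keeps exactly the
even-index terms, each twice.
-/

open Finset

theorem sum_range_choose_mul_pow_mul_eq {R : Type*} [CommSemiring R] {u : ℤ → R} {a b : ℤ}
    {c d : R} (h : ∀ s, u s + d * u (s + a) = c * u (s + b)) (n : ℕ) (s : ℤ) :
    ∑ j ∈ range (n + 1), (n.choose j : R) * d ^ j * u (a * j + s) = c ^ n * u (b * n + s) := by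
  induction n generalizing s with
  | zero => simp
  | succ n ih =>
    have hsplit := sum_choose_succ_mul (fun i _ => d ^ i * u (a * i + s)) n
    simp only [← mul_assoc] at hsplit
    have hshift : ∑ j ∈ range (n + 1), (n.choose j : R) * d ^ (j + 1) * u (a * ↑(j + 1) + s)
        = d * ∑ j ∈ range (n + 1), (n.choose j : R) * d ^ j * u (a * j + (s + a)) := by
      rw [mul_sum]
      refine sum_congr rfl fun j _ => ?_
      rw [pow_succ]
      push_cast
      ring_nf
    rw [hsplit, ih, hshift, ih, show b * n + (s + a) = b * n + s + a by ring,
      show b * ↑(n + 1) + s = b * n + s + b by push_cast; ring, pow_succ,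
      mul_left_comm, ← mul_add, h, mul_assoc]

theorem sum_range_one_add_neg_one_pow_mul {R : Type*} [CommRing R] (f : ℕ → R) (n : ℕ) :
    ∑ j ∈ range (n + 1), (1 + (-1) ^ j) * f j = 2 * ∑ k ∈ range (n / 2 + 1), f (2 * k) := by
  have hsupport : ∀ j ∈ range (n + 1), (1 + (-1 : R) ^ j) * f j ≠ 0 → Even j := by
    intro j _ hj
    by_contra hodd
    rw [(Nat.not_even_iff_odd.mp hodd).neg_one_pow] at hj
    simp at hj
  have hevens : (range (n + 1)).filter Even = (range (n / 2 + 1)).image (2 * ·) := by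
    ext j
    simp only [mem_filter, mem_range, mem_image]
    constructor
    · rintro ⟨hj, k, rfl⟩
      exact ⟨k, by omega, by ring⟩
    · rintro ⟨k, hk, rfl⟩
      exact ⟨by omega, even_two_mul k⟩
  rw [← sum_filter_of_ne hsupport, hevens, sum_image (by intro x _ y _ h; simpa using h),
    mul_sum]
  refine sum_congr rfl fun k _ => ?_
  rw [(even_two_mul k).neg_one_pow]
  ring

section Recurrence

variable {R : Type*} [CommRing R] {F : ℤ → R} (hF : ∀ j : ℤ, F j = F (j - 1) + F (j - 2))
include hF

theorem apply_add_two_of_recurrence (j : ℤ) : F (j + 2) = F (j + 1) + F j := by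
  simpa [add_sub_assoc] using hF (j + 2)

theorem apply_add_apply_add_three_of_recurrence (j : ℤ) : F j + F (j + 3) = 2 * F (j + 2) := by
  have h3 := apply_add_two_of_recurrence hF (j + 1)
  rw [show j + 1 + 2 = j + 3 by ring, show j + 1 + 1 = j + 2 by ring] at h3
  have h2 := apply_add_two_of_recurrence hF j
  linear_combination h3 - h2

theorem apply_sub_apply_add_three_of_recurrence (j : ℤ) :
    F j - F (j + 3) = -2 * F (j + 1) := by
  have h3 := apply_add_two_of_recurrence hF (j + 1)
  rw [show j + 1 + 2 = j + 3 by ring, show j + 1 + 1 = j + 2 by ring] at h3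
  have h2 := apply_add_two_of_recurrence hF j
  linear_combination -h3 - h2

end Recurrence

theorem stmt2_general (F : ℤ → ℤ) (hF : ∀ j : ℤ, F j = F (j - 1) + F (j - 2)) (n : ℕ) (s : ℤ) :
    2 * ∑ k ∈ Finset.range (n / 2 + 1), (n.choose (2 * k) : ℤ) * F (6 * (k : ℤ) + s)
      = 2 ^ n * (F (2 * (n : ℤ) + s) + (-1 : ℤ) ^ n * F ((n : ℤ) + s)) := by
  have hplus := sum_range_choose_mul_pow_mul_eq (u := F) (a := 3) (b := 2) (c := 2) (d := 1)
    (fun j => by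
      rw [one_mul]
      exact apply_add_apply_add_three_of_recurrence hF j) n s
  have hminus := sum_range_choose_mul_pow_mul_eq (u := F) (a := 3) (b := 1) (c := -2) (d := -1)
    (fun j => by
      rw [neg_one_mul, ← sub_eq_add_neg]
      exact apply_sub_apply_add_three_of_recurrence hF j) n s
  calc 2 * ∑ k ∈ range (n / 2 + 1), (n.choose (2 * k) : ℤ) * F (6 * (k : ℤ) + s)
      = ∑ j ∈ range (n + 1), (1 + (-1) ^ j) * ((n.choose j : ℤ) * F (3 * j + s)) := by
        rw [sum_range_one_add_neg_one_pow_mul]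
        refine congrArg (2 * ·) (sum_congr rfl fun k _ => ?_)
        rw [show 6 * (k : ℤ) + s = 3 * ((2 * k : ℕ) : ℤ) + s by push_cast; ring]
    _ = ∑ j ∈ range (n + 1), (n.choose j : ℤ) * 1 ^ j * F (3 * j + s)
          + ∑ j ∈ range (n + 1), (n.choose j : ℤ) * (-1) ^ j * F (3 * j + s) := by
        rw [← sum_add_distrib]
        exact sum_congr rfl fun j _ => by ring
    _ = 2 ^ n * (F (2 * (n : ℤ) + s) + (-1 : ℤ) ^ n * F ((n : ℤ) + s)) := by
        rw [hplus, hminus, neg_pow]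
        ring_nf

theorem stmt2 (F : ℤ → ℤ) (hF0 : F 0 = 0) (hF1 : F 1 = 1)
    (hF : ∀ j : ℤ, F j = F (j - 1) + F (j - 2)) (n : ℕ) (s : ℤ) :
    2 * ∑ k ∈ Finset.range (n / 2 + 1), (n.choose (2 * k) : ℤ) * F (6 * (k : ℤ) + s)
      = 2 ^ n * (F (2 * (n : ℤ) + s) + (-1 : ℤ) ^ n * F ((n : ℤ) + s)) :=
  stmt2_general F hF n s
end

section
/- For every non-negative integer n and all integers s and j, 2 * ∑_{k=0}^{n} C(2n, 2k) * L(j(4k+s)) = (L(j)^(2n) + 5^n * F(j)^(2n)) * L(j(2n+s)). -/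
/-!
By Binet, `L m = φ ^ m + ψ ^ m` and `√5 * F m = φ ^ m - ψ ^ m`. Put `x = φ ^ (2 * j)` and
`y = ψ ^ (2 * j)`, so `x * y = 1`. The even-index binomial sum turns the left side into
`φ ^ (j * s) * ((1 + x) ^ (2 * n) + (1 - x) ^ (2 * n))` plus its `ψ`-analogue, and
`(1 ± x) ^ 2 = x * (x + y ± 2)`. Since `(φ * ψ) ^ j = ±1`, the squares `L j ^ 2` and `5 * F j ^ 2`
are `x + y + 2` and `x + y - 2` in some order, which gives the right side.
-/

open Finset Real goldenRatio

theorem eq_of_fib_recurrence {G : Type*} [Add G] [IsLeftCancelAdd G] {f g : ℤ → G}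
    (hf : ∀ m, f m = f (m - 1) + f (m - 2)) (hg : ∀ m, g m = g (m - 1) + g (m - 2))
    (h0 : f 0 = g 0) (h1 : f 1 = g 1) : f = g := by
  suffices h : ∀ m, f m = g m ∧ f (m + 1) = g (m + 1) from funext fun m ↦ (h m).1
  intro m
  induction m using Int.induction_on with
  | zero => exact ⟨h0, h1⟩
  | succ k ih =>
    refine ⟨ih.2, ?_⟩
    rw [hf, hg, show (k : ℤ) + 1 + 1 - 1 = k + 1 by ring, show (k : ℤ) + 1 + 1 - 2 = k by ring,
      ih.1, ih.2]
  | pred k ih =>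
    refine ⟨add_left_cancel (a := f (-k)) ?_, by rw [sub_add_cancel]; exact ih.1⟩
    have hf' := hf (-k + 1)
    have hg' := hg (-k + 1)
    rw [add_sub_cancel_right, show -(k : ℤ) + 1 - 2 = -k - 1 by ring] at hf' hg'
    rw [← hf', ih.1, ih.2, hg']

theorem zpow_eq_zpow_sub_one_add_zpow_sub_two {K : Type*} [DivisionRing K] {x : K}
    (hx : x ^ 2 = x + 1) (m : ℤ) : x ^ m = x ^ (m - 1) + x ^ (m - 2) := by
  have hx0 : x ≠ 0 := by rintro rfl; norm_num at hx
  calc x ^ m = x ^ (m - 2) * x ^ 2 := by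
        rw [← zpow_natCast, ← zpow_add₀ hx0]; norm_num
    _ = x ^ (m - 2 + 1) + x ^ (m - 2) := by rw [hx, mul_add, mul_one, zpow_add_one₀ hx0]
    _ = x ^ (m - 1) + x ^ (m - 2) := by ring_nf

theorem cast_eq_goldenRatio_zpow_add_goldenConj_zpow {L : ℤ → ℤ} (hL0 : L 0 = 2) (hL1 : L 1 = 1)
    (hL : ∀ m, L m = L (m - 1) + L (m - 2)) (m : ℤ) : (L m : ℝ) = φ ^ m + ψ ^ m := by
  refine congrFun (eq_of_fib_recurrence (f := fun m ↦ (L m : ℝ)) (g := fun m ↦ φ ^ m + ψ ^ m)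
    (fun m ↦ ?_) (fun m ↦ ?_) ?_ ?_) m
  · simp only [hL m, Int.cast_add]
  · rw [zpow_eq_zpow_sub_one_add_zpow_sub_two goldenRatio_sq m,
      zpow_eq_zpow_sub_one_add_zpow_sub_two goldenConj_sq m]
    ring
  · norm_num [hL0]
  · simp [hL1, goldenRatio_add_goldenConj]

theorem eq_intFib_of_fib_recurrence {F : ℤ → ℤ} (hF0 : F 0 = 0) (hF1 : F 1 = 1)
    (hF : ∀ m, F m = F (m - 1) + F (m - 2)) : F = Int.fib := by
  refine eq_of_fib_recurrence hF (fun m ↦ ?_) (by simp [hF0]) (by simp [hF1])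
  have := Int.fib_add_two (m - 2)
  rw [sub_add_cancel, show m - 2 + 1 = m - 1 by ring] at this
  rw [this, add_comm]

theorem sqrt_five_mul_intFib (m : ℤ) : √5 * Int.fib m = φ ^ m - ψ ^ m := by
  rw [coe_intFib_eq, mul_div_cancel₀ _ (by positivity)]

theorem two_mul_sum_choose_even_mul_pow {R : Type*} [CommRing R] (x : R) (n : ℕ) :
    2 * ∑ k ∈ range (n + 1), ((2 * n).choose (2 * k) : R) * x ^ (2 * k)
      = (1 + x) ^ (2 * n) + (1 - x) ^ (2 * n) := by
  set g : ℕ → R := fun i ↦ (2 * n).choose i * (x ^ i + (-x) ^ i)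
  have hsum : (1 + x) ^ (2 * n) + (1 - x) ^ (2 * n) = ∑ i ∈ range (2 * n + 1), g i := by
    rw [add_comm 1 x, sub_eq_add_neg, add_comm 1 (-x), add_pow, add_pow, ← sum_add_distrib]
    simp only [g, one_pow, mul_one]
    exact sum_congr rfl fun i _ ↦ by ring
  have hsub : (range (n + 1)).image (2 * ·) ⊆ range (2 * n + 1) := by
    intro i; simp only [mem_image, mem_range]; omega
  have hodd : ∀ i ∈ range (2 * n + 1), i ∉ (range (n + 1)).image (2 * ·) → g i = 0 := by
    intro i hi hi'
    have : Odd i := Nat.odd_iff.mpr <| by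
      by_contra h
      rw [mem_range] at hi
      exact hi' (mem_image.mpr ⟨i / 2, mem_range.mpr (by omega), by omega⟩)
    simp [g, this.neg_pow]
  rw [hsum, ← sum_subset hsub hodd, sum_image fun _ _ _ _ h ↦ by simpa using h, mul_sum]
  exact sum_congr rfl fun k _ ↦ by simp only [g, (even_two_mul k).neg_pow]; ring

theorem one_add_pow_add_one_sub_pow_of_mul_eq_one {R : Type*} [CommRing R] {x y : R}
    (hxy : x * y = 1) (n : ℕ) :
    (1 + x) ^ (2 * n) + (1 - x) ^ (2 * n) = x ^ n * ((x + y + 2) ^ n + (x + y - 2) ^ n) := by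
  rw [pow_mul, pow_mul, mul_add, ← mul_pow, ← mul_pow]
  congr 2 <;> linear_combination -hxy

theorem two_mul_sum_choose_mul_zpow_add_zpow {K : Type*} [Field K] {a b : K} (hab : a * b = -1)
    (n : ℕ) (s j : ℤ) :
    2 * ∑ k ∈ range (n + 1),
        ((2 * n).choose (2 * k) : K) * (a ^ (j * (4 * k + s)) + b ^ (j * (4 * k + s)))
      = ((a ^ j + b ^ j) ^ (2 * n) + (a ^ j - b ^ j) ^ (2 * n))
        * (a ^ (j * (2 * n + s)) + b ^ (j * (2 * n + s))) := by
  have ha : a ≠ 0 := left_ne_zero_of_mul (by rw [hab]; norm_num)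
  have hb : b ≠ 0 := right_ne_zero_of_mul (by rw [hab]; norm_num)
  have hsplit : ∀ c : K, c ≠ 0 → ∀ m : ℕ,
      c ^ (j * (2 * m + s)) = c ^ (j * s) * ((c ^ j) ^ 2) ^ m := by
    intro c hc m
    rw [← pow_mul, ← zpow_natCast, ← zpow_mul, ← zpow_add₀ hc]
    push_cast
    ring_nf
  have hterm : ∀ c : K, c ≠ 0 → ∀ k : ℕ,
      c ^ (j * (4 * k + s)) = c ^ (j * s) * ((c ^ j) ^ 2) ^ (2 * k) := by
    intro c hc k
    rw [← hsplit c hc]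
    push_cast
    ring_nf
  have hε : a ^ j * b ^ j = 1 ∨ a ^ j * b ^ j = -1 := by
    rw [← mul_zpow, hab]
    exact (Int.even_or_odd j).imp Even.neg_one_zpow Odd.neg_one_zpow
  set x := (a ^ j) ^ 2 with hx
  set y := (b ^ j) ^ 2 with hy
  have hxy : x * y = 1 := by
    rw [hx, hy, ← mul_pow]
    rcases hε with h | h <;> rw [h] <;> norm_num
  have hS : (a ^ j + b ^ j) ^ (2 * n) + (a ^ j - b ^ j) ^ (2 * n)
      = (x + y + 2) ^ n + (x + y - 2) ^ n := by
    rw [pow_mul, pow_mul, show (a ^ j + b ^ j) ^ 2 = x + y + 2 * (a ^ j * b ^ j) by ring,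
      show (a ^ j - b ^ j) ^ 2 = x + y - 2 * (a ^ j * b ^ j) by ring]
    rcases hε with h | h <;> rw [h]
    · ring
    · rw [add_comm]; ring
  calc _ = a ^ (j * s) * (2 * ∑ k ∈ range (n + 1), ((2 * n).choose (2 * k) : K) * x ^ (2 * k))
        + b ^ (j * s) * (2 * ∑ k ∈ range (n + 1), ((2 * n).choose (2 * k) : K) * y ^ (2 * k)) := by
        simp only [hterm a ha, hterm b hb, mul_sum, ← sum_add_distrib]
        exact sum_congr rfl fun k _ ↦ by ring
    _ = a ^ (j * s) * (x ^ n * ((x + y + 2) ^ n + (x + y - 2) ^ n))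
        + b ^ (j * s) * (y ^ n * ((x + y + 2) ^ n + (x + y - 2) ^ n)) := by
        rw [two_mul_sum_choose_even_mul_pow, two_mul_sum_choose_even_mul_pow,
          one_add_pow_add_one_sub_pow_of_mul_eq_one hxy,
          one_add_pow_add_one_sub_pow_of_mul_eq_one (y := x) (by rwa [mul_comm]), add_comm y x]
    _ = _ := by rw [hS, hsplit a ha, hsplit b hb]; ring

theorem stmt5 (F : ℤ → ℤ) (hF0 : F 0 = 0) (hF1 : F 1 = 1)
    (hF : ∀ j : ℤ, F j = F (j - 1) + F (j - 2)) (L : ℤ → ℤ) (hL0 : L 0 = 2) (hL1 : L 1 = 1)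
    (hL : ∀ j : ℤ, L j = L (j - 1) + L (j - 2)) (n : ℕ) (s j : ℤ) :
    2 * ∑ k ∈ Finset.range (n + 1), ((2 * n).choose (2 * k) : ℤ) * L (j * (4 * (k : ℤ) + s))
      = (L j ^ (2 * n) + 5 ^ n * F j ^ (2 * n)) * L (j * (2 * (n : ℤ) + s)) := by
  obtain rfl := eq_intFib_of_fib_recurrence hF0 hF1 hF
  have h5 : (5 : ℝ) ^ n * Int.fib j ^ (2 * n) = (φ ^ j - ψ ^ j) ^ (2 * n) := by
    rw [← sqrt_five_mul_intFib, mul_pow, pow_mul √5, Real.sq_sqrt (by norm_num)]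
  apply Int.cast_injective (α := ℝ)
  push_cast
  simp only [cast_eq_goldenRatio_zpow_add_goldenConj_zpow hL0 hL1 hL, h5]
  exact two_mul_sum_choose_mul_zpow_add_zpow goldenRatio_mul_goldenConj n s j
end

section
/- For every positive integer n and every integer s, ∑_{k=1}^{n} C(2n-1, 2k-1) * F(6k+s) = 4^(n-1) * (F(4n+1+s) + F(2n+2+s)). -/
/-!
Let `φ` be a root of `X² - X - 1`. Then `φ³ + 1 = 2φ²` and `φ³ - 1 = 2φ`, and adding the binomial
expansions of `(φ³ + 1)^(2n-1)` and `(φ³ - 1)^(2n-1)` keeps exactly twice the odd-index terms: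
`2 ∑ C(2n-1, 2k-1) φ^(6k) = 2 · 4^(n-1) (φ^(4n+1) + φ^(2n+2))`.
So `X² - X - 1` divides the corresponding difference of integer polynomials. Evaluated at the shift
operator, `X² - X - 1` kills every solution of the Fibonacci recurrence, hence so does that
difference, which is the identity (times 2) for every such sequence.
-/

open Finset Polynomial

theorem Finset.sum_range_two_mul {M : Type*} [AddCommMonoid M] (f : ℕ → M) (n : ℕ) :
    ∑ j ∈ range (2 * n), f j = ∑ k ∈ range n, (f (2 * k) + f (2 * k + 1)) := by
  induction n with
  | zero => simp
  | succ n ih => rw [mul_add_one, sum_range_succ, sum_range_succ, sum_range_succ, ih, add_assoc]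

theorem add_one_pow_add_sub_one_pow {R : Type*} [CommRing R] (x : R) (m : ℕ) :
    (x + 1) ^ (2 * m + 1) + (x - 1) ^ (2 * m + 1)
      = 2 * ∑ k ∈ range (m + 1), ((2 * m + 1).choose (2 * k + 1) : R) * x ^ (2 * k + 1) := by
  rw [add_pow, sub_eq_add_neg, add_pow, ← sum_add_distrib,
    show 2 * m + 1 + 1 = 2 * (m + 1) by ring, sum_range_two_mul, mul_sum]
  refine sum_congr rfl fun k hk => ?_
  have hk : k ≤ m := Nat.lt_succ_iff.mp (mem_range.mp hk)
  have h_odd : Odd (2 * m + 1 - 2 * k) := ⟨m - k, by omega⟩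
  have h_even : Even (2 * m + 1 - (2 * k + 1)) := ⟨m - k, by omega⟩
  rw [h_odd.neg_one_pow, h_even.neg_one_pow]
  ring

theorem two_mul_sum_choose_mul_pow_of_sq_eq_add_one {R : Type*} [CommRing R] {φ : R}
    (hφ : φ ^ 2 = φ + 1) {n : ℕ} (hn : 0 < n) :
    2 * ∑ k ∈ Icc 1 n, ((2 * n - 1).choose (2 * k - 1) : R) * φ ^ (6 * k)
      = 2 * (4 ^ (n - 1) * (φ ^ (4 * n + 1) + φ ^ (2 * n + 2))) := by
  obtain ⟨m, rfl⟩ : ∃ m, n = m + 1 := ⟨n - 1, by omega⟩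
  have h_plus : φ ^ 3 + 1 = 2 * φ ^ 2 := by linear_combination (φ - 1) * hφ
  have h_minus : φ ^ 3 - 1 = 2 * φ := by linear_combination (φ + 1) * hφ
  have h_reindex : ∑ k ∈ Icc 1 (m + 1), ((2 * (m + 1) - 1).choose (2 * k - 1) : R) * φ ^ (6 * k)
      = φ ^ 3 * ∑ k ∈ range (m + 1),
          ((2 * m + 1).choose (2 * k + 1) : R) * (φ ^ 3) ^ (2 * k + 1) := by
    rw [← Ico_add_one_right_eq_Icc, sum_Ico_eq_sum_range, mul_sum]
    refine sum_congr rfl fun k _ => ?_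
    rw [show 2 * (1 + k) - 1 = 2 * k + 1 by omega, show 2 * (m + 1) - 1 = 2 * m + 1 by omega]
    ring
  calc 2 * ∑ k ∈ Icc 1 (m + 1), ((2 * (m + 1) - 1).choose (2 * k - 1) : R) * φ ^ (6 * k)
      = φ ^ 3 * ((φ ^ 3 + 1) ^ (2 * m + 1) + (φ ^ 3 - 1) ^ (2 * m + 1)) := by
        rw [h_reindex, add_one_pow_add_sub_one_pow]; ring
    _ = 2 * (4 ^ (m + 1 - 1) * (φ ^ (4 * (m + 1) + 1) + φ ^ (2 * (m + 1) + 2))) := by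
        rw [h_plus, h_minus, Nat.add_sub_cancel, show (4 : R) = 2 ^ 2 by norm_num, ← pow_mul]
        ring

variable {R : Type*} [CommRing R]

def shift : Module.End R (ℤ → R) := LinearMap.funLeft R R (· + 1)

@[simp]
theorem shift_apply (G : ℤ → R) (j : ℤ) : shift G j = G (j + 1) := rfl

@[simp]
theorem shift_pow_apply (m : ℕ) (G : ℤ → R) (j : ℤ) : (shift ^ m) G j = G (m + j) := by
  induction m generalizing j with
  | zero => simp
  | succ m ih =>
    rw [pow_succ', Module.End.mul_apply, shift_apply, ih, Nat.cast_succ, add_comm j, add_assoc]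

theorem aeval_shift_eq_of_dvd_sub {f p q : R[X]} {G : ℤ → R} (hG : aeval shift f G = 0)
    (h : f ∣ p - q) : aeval shift p G = aeval shift q G := by
  obtain ⟨r, hr⟩ := h
  rw [← sub_eq_zero, ← LinearMap.sub_apply, ← map_sub, hr, mul_comm, map_mul,
    Module.End.mul_apply, hG, map_zero]

theorem aeval_shift_X_sq_sub_X_sub_one {G : ℤ → R} (hG : ∀ j, G j = G (j - 1) + G (j - 2)) :
    aeval shift (X ^ 2 - X - 1 : R[X]) G = 0 := by
  funext j
  have h := hG (2 + j)
  rw [show 2 + j - 1 = j + 1 by ring, add_sub_cancel_left] at h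
  simp only [map_sub, map_pow, aeval_X, map_one, LinearMap.sub_apply, Module.End.one_apply,
    Pi.sub_apply, Pi.zero_apply, shift_pow_apply, shift_apply]
  push_cast
  linear_combination h

theorem stmt12_general (F : ℤ → ℤ) (hF : ∀ j : ℤ, F j = F (j - 1) + F (j - 2))
    (n : ℕ) (hn : 0 < n) (s : ℤ) :
    ∑ k ∈ Finset.Icc 1 n, ((2 * n - 1).choose (2 * k - 1) : ℤ) * F (6 * (k : ℤ) + s)
      = 4 ^ (n - 1) * (F (4 * (n : ℤ) + 1 + s) + F (2 * (n : ℤ) + 2 + s)) := by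
  set f : ℤ[X] := X ^ 2 - X - 1
  set P : ℤ[X] := ∑ k ∈ Icc 1 n, ((2 * n - 1).choose (2 * k - 1) : ℤ) • X ^ (6 * k)
  set Q : ℤ[X] := (4 ^ (n - 1) : ℤ) • (X ^ (4 * n + 1) + X ^ (2 * n + 2))
  have h_root : AdjoinRoot.root f ^ 2 = AdjoinRoot.root f + 1 := by
    have := AdjoinRoot.eval₂_root f
    simp only [eval₂_sub, eval₂_X_pow, eval₂_X, eval₂_one, f] at this
    linear_combination this
  have h_dvd : f ∣ 2 * P - 2 * Q := by
    rw [← AdjoinRoot.mk_eq_mk]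
    simpa [P, Q, map_ofNat, mul_add] using two_mul_sum_choose_mul_pow_of_sq_eq_add_one h_root hn
  have h := congrFun (aeval_shift_eq_of_dvd_sub (aeval_shift_X_sq_sub_X_sub_one hF) h_dvd) s
  simp only [P, Q, map_mul, map_sum, map_zsmul, map_add, map_pow, aeval_X, map_ofNat,
    Module.End.mul_apply, Module.End.ofNat_apply, LinearMap.smul_apply, LinearMap.add_apply,
    LinearMap.sum_apply, Finset.sum_apply, Pi.add_apply, Pi.smul_apply, smul_eq_mul, nsmul_eq_mul,
    Nat.cast_ofNat, Pi.mul_apply, Pi.ofNat_apply, shift_pow_apply] at h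
  simp only [mul_left_comm _ (2 : ℤ), ← mul_sum, ← mul_add] at h
  exact mul_left_cancel₀ two_ne_zero h

theorem stmt12 (F : ℤ → ℤ) (hF0 : F 0 = 0) (hF1 : F 1 = 1)
    (hF : ∀ j : ℤ, F j = F (j - 1) + F (j - 2)) (n : ℕ) (hn : 0 < n) (s : ℤ) :
    ∑ k ∈ Finset.Icc 1 n, ((2 * n - 1).choose (2 * k - 1) : ℤ) * F (6 * (k : ℤ) + s)
      = 4 ^ (n - 1) * (F (4 * (n : ℤ) + 1 + s) + F (2 * (n : ℤ) + 2 + s)) :=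
  stmt12_general F hF n hn s
end

section
/- For every non-negative integer n and every integer s, 2 * ∑_{k=0}^{n} C(2n, 2k) * F(6k+s) equals 4^n * L(n) * F(3n+s) if n is even, and 4^n * F(n) * L(3n+s) if n is odd. -/
/-! With `T` the shift `G ↦ G (· + 1)`, every solution of the Fibonacci recurrence satisfies
`1 + T³ = 2T²` and `1 - T³ = -2T`, so the binomial theorem gives
`∑ C(m,j) F(3j+s) = 2^m F(2m+s)` and `∑ (-1)^j C(m,j) F(3j+s) = (-2)^m F(m+s)`.
For `m = 2n` the sum of the two picks out the even indices: `2 ∑ = 4^n (F(4n+s) + F(2n+s))`.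
With `a = 3n+s` this is `4^n (F(a+n) + F(a-n))`, and `F(a+n) ± (-1)^n F(a-n)` equals
`F(a) L(n)` resp. `L(a) F(n)`. -/

open Finset

section

variable {R : Type*} [CommRing R]

lemma two_mul_sum_range_even (g : ℕ → R) (n : ℕ) :
    2 * ∑ k ∈ range (n + 1), g (2 * k) =
      ∑ j ∈ range (2 * n + 1), g j + ∑ j ∈ range (2 * n + 1), (-1) ^ j * g j := by
  induction n with
  | zero => simp; ring
  | succ n ih =>
    rw [show 2 * (n + 1) + 1 = 2 * n + 1 + 1 + 1 by ring, sum_range_succ,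
      sum_range_succ _ (2 * n + 1 + 1), sum_range_succ _ (2 * n + 1),
      sum_range_succ (fun j => (-1) ^ j * g j) (2 * n + 1 + 1),
      sum_range_succ (fun j => (-1) ^ j * g j) (2 * n + 1)]
    simp only [pow_succ, pow_mul]
    linear_combination (norm := ring_nf) ih

lemma sum_range_choose_mul_pow_mul (G : ℤ → R) (c d : R) (t e : ℤ)
    (hG : ∀ s, G s + c * G (s + t) = d * G (s + e)) (m : ℕ) (s : ℤ) :
    ∑ j ∈ range (m + 1), (m.choose j : R) * (c ^ j * G (t * j + s)) = d ^ m * G (e * m + s) := by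
  induction m generalizing s with
  | zero => simp
  | succ m ih =>
    have shift : ∑ i ∈ range (m + 1), (m.choose i : R) * (c ^ (i + 1) * G (t * ↑(i + 1) + s)) =
        c * ∑ i ∈ range (m + 1), (m.choose i : R) * (c ^ i * G (t * i + (s + t))) := by
      rw [mul_sum]
      refine sum_congr rfl fun i _ => ?_
      push_cast
      ring_nf
    rw [sum_choose_succ_mul (fun i _ => c ^ i * G (t * i + s)), shift, ih, ih]
    push_cast
    linear_combination (norm := ring_nf) d ^ m * hG (e * m + s)

def IsFibRec (u : ℤ → R) : Prop := ∀ j, u (j + 2) = u (j + 1) + u j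

namespace IsFibRec

variable {u v : ℤ → R}

lemma of_sub (h : ∀ j, u j = u (j - 1) + u (j - 2)) : IsFibRec u := fun j => by
  simpa [show j + 2 - 1 = j + 1 by ring] using h (j + 2)

lemma ext (hu : IsFibRec u) (hv : IsFibRec v) (h0 : u 0 = v 0) (h1 : u 1 = v 1) : u = v := by
  suffices ∀ n : ℤ, u n = v n ∧ u (n + 1) = v (n + 1) from funext fun n => (this n).1
  intro n
  induction n using Int.induction_on with
  | zero => simpa using ⟨h0, h1⟩
  | succ i ih =>
    refine ⟨ih.2, ?_⟩
    rw [add_assoc, one_add_one_eq_two, hu, hv, ih.1, ih.2]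
  | pred i ih =>
    refine ⟨?_, by simpa using ih.1⟩
    have hu' := hu (-i - 1)
    have hv' := hv (-i - 1)
    rw [show -(i : ℤ) - 1 + 2 = -i + 1 by ring, show -(i : ℤ) - 1 + 1 = -i by ring] at hu' hv'
    linear_combination hv' - hu' + ih.2 - ih.1

variable {x F L : ℤ → R}

lemma add_add_neg_one_pow_mul_sub (hx : IsFibRec x) (hL : IsFibRec L) (hL0 : L 0 = 2)
    (hL1 : L 1 = 1) (a : ℤ) (b : ℕ) : x (a + b) + (-1) ^ b * x (a - b) = x a * L b := by
  induction b using Nat.twoStepInduction with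
  | zero => simp [hL0]; ring
  | one => push_cast; rw [hL1]; linear_combination (norm := ring_nf) hx (a - 1)
  | more b ih₀ ih₁ =>
    push_cast at *
    linear_combination (norm := ring_nf)
      ih₀ + ih₁ + hx (a + b) - (-1) ^ b * hx (a - b - 2) - x a * hL b

lemma add_sub_neg_one_pow_mul_sub (hx : IsFibRec x) (hF : IsFibRec F) (hF0 : F 0 = 0)
    (hF1 : F 1 = 1) (a : ℤ) (b : ℕ) :
    x (a + b) - (-1) ^ b * x (a - b) = (x (a + 1) + x (a - 1)) * F b := by
  induction b using Nat.twoStepInduction with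
  | zero => simp [hF0]
  | one => push_cast; rw [hF1]; ring
  | more b ih₀ ih₁ =>
    push_cast at *
    linear_combination (norm := ring_nf)
      ih₀ + ih₁ + hx (a + b) + (-1) ^ b * hx (a - b - 2) - (x (a + 1) + x (a - 1)) * hF b

lemma eq_add_one_add_sub_one (hF : IsFibRec F) (hF0 : F 0 = 0) (hF1 : F 1 = 1)
    (hL : IsFibRec L) (hL0 : L 0 = 2) (hL1 : L 1 = 1) (a : ℤ) : L a = F (a + 1) + F (a - 1) := by
  refine congrFun (hL.ext (v := fun a => F (a + 1) + F (a - 1)) (fun j => ?_) ?_ ?_) a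
  · linear_combination (norm := ring_nf) hF (j + 1) + hF (j - 1)
  · linear_combination (norm := ring_nf) hL0 + hF (-1) - 2 * hF1 + hF0
  · linear_combination (norm := ring_nf) hL1 - hF 0 - hF1 - 2 * hF0

lemma two_mul_sum_choose_even_mul (hF : IsFibRec F) (n : ℕ) (s : ℤ) :
    2 * ∑ k ∈ range (n + 1), ((2 * n).choose (2 * k) : R) * F (6 * k + s) =
      4 ^ n * (F (4 * n + s) + F (2 * n + s)) := by
  have h_add := sum_range_choose_mul_pow_mul F 1 2 3 2
    (fun s => by linear_combination (norm := ring_nf) hF (s + 1) - hF s) (2 * n) s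
  have h_alt := sum_range_choose_mul_pow_mul F (-1) (-2) 3 1
    (fun s => by linear_combination (norm := ring_nf) -hF (s + 1) - hF s) (2 * n) s
  simp only [one_pow, one_mul] at h_add
  simp only [mul_left_comm _ ((-1 : R) ^ _)] at h_alt
  have h4 : (4 : R) ^ n = 2 ^ (2 * n) := by rw [pow_mul]; norm_num
  have h4' : (4 : R) ^ n = (-2) ^ (2 * n) := by rw [pow_mul]; norm_num
  calc 2 * ∑ k ∈ range (n + 1), ((2 * n).choose (2 * k) : R) * F (6 * k + s)
      = 2 * ∑ k ∈ range (n + 1), ((2 * n).choose (2 * k) : R) * F (3 * ↑(2 * k) + s) := by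
        congr 1
        refine sum_congr rfl fun k _ => ?_
        push_cast
        ring_nf
    _ = _ := by
      rw [two_mul_sum_range_even (fun j => ((2 * n).choose j : R) * F (3 * j + s)), h_add, h_alt]
      push_cast
      linear_combination (norm := ring_nf) -F (4 * n + s) * h4 - F (2 * n + s) * h4'

end IsFibRec

end

theorem stmt14 (F : ℤ → ℤ) (hF0 : F 0 = 0) (hF1 : F 1 = 1)
    (hF : ∀ j : ℤ, F j = F (j - 1) + F (j - 2)) (L : ℤ → ℤ) (hL0 : L 0 = 2) (hL1 : L 1 = 1)
    (hL : ∀ j : ℤ, L j = L (j - 1) + L (j - 2)) (n : ℕ) (s : ℤ) :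
    (Even n → 2 * ∑ k ∈ Finset.range (n + 1), ((2 * n).choose (2 * k) : ℤ) * F (6 * (k : ℤ) + s)
        = 4 ^ n * L (n : ℤ) * F (3 * (n : ℤ) + s)) ∧
    (Odd n → 2 * ∑ k ∈ Finset.range (n + 1), ((2 * n).choose (2 * k) : ℤ) * F (6 * (k : ℤ) + s)
        = 4 ^ n * F (n : ℤ) * L (3 * (n : ℤ) + s)) := by
  have hF' := IsFibRec.of_sub hF
  have hL' := IsFibRec.of_sub hL
  have hsum := hF'.two_mul_sum_choose_even_mul n s
  have h4n : 3 * (n : ℤ) + s + n = 4 * n + s := by ring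
  have h2n : 3 * (n : ℤ) + s - n = 2 * n + s := by ring
  refine ⟨fun hn => ?_, fun hn => ?_⟩
  · have h := hF'.add_add_neg_one_pow_mul_sub hL' hL0 hL1 (3 * n + s) n
    rw [hn.neg_one_pow, one_mul, h4n, h2n] at h
    linear_combination hsum + 4 ^ n * h
  · have h := hF'.add_sub_neg_one_pow_mul_sub hF' hF0 hF1 (3 * n + s) n
    rw [hn.neg_one_pow, neg_one_mul, sub_neg_eq_add, h4n, h2n,
      ← hF'.eq_add_one_add_sub_one hF0 hF1 hL' hL0 hL1] at h
    linear_combination hsum + 4 ^ n * h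
end

section
/- For all integers k, r, s, t, the identity 5*F(k+r)*F(k+s)*F(k+t) = F(3k+r+s+t) - (-1)^(k+r)*F(k+s+t-r) - (-1)^(k+t)*L(s-t)*F(k+r) holds. -/
/-!
For any sequence `G` obeying the Fibonacci recurrence and any `m`, both
`n ↦ G(m + n) - (-1)^n G(m - n)` and `n ↦ F n * (G(m + 1) + G(m - 1))` obey it too, and they
agree at `n = 0, 1`; hence they coincide. For `G = F` this gives
`F(a + b + c) - (-1)^a F(b + c - a) = F a * L(b + c)`, and for `G = L` it gives
`L(b + c) - (-1)^c L(b - c) = 5 F b F c`, because `L(m + 1) + L(m - 1) = 5 F m`.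
Multiplying the second identity by `F a` and adding the first yields the theorem with
`a = k + r`, `b = k + s`, `c = k + t`.
-/

def IsFibLike (G : ℤ → ℤ) : Prop := ∀ j : ℤ, G j = G (j - 1) + G (j - 2)

lemma neg_one_pow_natAbs_sub_one (j : ℤ) :
    (-1 : ℤ) ^ (j - 1).natAbs = -(-1 : ℤ) ^ j.natAbs := by
  rw [← Int.coe_negOnePow ℤ, ← Int.coe_negOnePow ℤ, Int.negOnePow_sub, Int.negOnePow_one]
  simp

namespace IsFibLike

variable {G H : ℤ → ℤ}

lemma apply_add_one (hG : IsFibLike G) (j : ℤ) : G (j + 1) = G j + G (j - 1) := by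
  have h := hG (j + 1)
  rwa [add_sub_cancel_right, show j + 1 - 2 = j - 1 by ring] at h

lemma apply_add_two (hG : IsFibLike G) (j : ℤ) : G (j + 2) = G (j + 1) + G j := by
  have h := hG.apply_add_one (j + 1)
  rwa [add_sub_cancel_right, add_assoc, one_add_one_eq_two] at h

lemma ext (hG : IsFibLike G) (hH : IsFibLike H) (h0 : G 0 = H 0) (h1 : G 1 = H 1) : G = H := by
  suffices h : ∀ n : ℤ, G n = H n ∧ G (n + 1) = H (n + 1) from funext fun n => (h n).1
  intro n
  induction n using Int.induction_on with
  | zero => exact ⟨h0, by simpa using h1⟩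
  | succ i ih =>
    refine ⟨ih.2, ?_⟩
    rw [add_assoc, one_add_one_eq_two, hG.apply_add_two, hH.apply_add_two, ih.1, ih.2]
  | pred i ih =>
    refine ⟨?_, by rw [sub_add_cancel]; exact ih.1⟩
    linarith [hG.apply_add_one (-i), hH.apply_add_one (-i), ih.1, ih.2]

lemma add (hG : IsFibLike G) (hH : IsFibLike H) : IsFibLike fun n => G n + H n := by
  intro j
  linear_combination hG j + hH j

lemma sub (hG : IsFibLike G) (hH : IsFibLike H) : IsFibLike fun n => G n - H n := by
  intro j
  linear_combination hG j - hH j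

lemma mul_const (hG : IsFibLike G) (c : ℤ) : IsFibLike fun n => G n * c := by
  intro j
  linear_combination c * hG j

lemma comp_add_const (hG : IsFibLike G) (m : ℤ) : IsFibLike fun n => G (n + m) := by
  intro j
  simpa only [sub_add_eq_add_sub] using hG (j + m)

lemma reflect (hG : IsFibLike G) (m : ℤ) :
    IsFibLike fun n => (-1 : ℤ) ^ n.natAbs * G (m - n) := by
  intro j
  have hsign₁ := neg_one_pow_natAbs_sub_one j
  have hsign₂ := neg_one_pow_natAbs_sub_one (j - 1)
  have hrec := hG.apply_add_two (m - j)
  rw [sub_sub, one_add_one_eq_two] at hsign₂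
  rw [show m - j + 2 = m - (j - 2) by ring, show m - j + 1 = m - (j - 1) by ring] at hrec
  simp only [hsign₂, hsign₁, hrec]
  ring

lemma apply_add_sub_neg_one_pow_mul_apply_sub {F : ℤ → ℤ} (hF : IsFibLike F) (hF0 : F 0 = 0)
    (hF1 : F 1 = 1) (hG : IsFibLike G) (m n : ℤ) :
    G (n + m) - (-1 : ℤ) ^ n.natAbs * G (m - n) = F n * (G (m + 1) + G (m - 1)) := by
  refine congrFun (((hG.comp_add_const m).sub (hG.reflect m)).ext
    (hF.mul_const (G (m + 1) + G (m - 1))) ?_ ?_) n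
  · simp [hF0]
  · simp [hF1, sub_eq_add_neg, add_comm]

end IsFibLike

section FibonacciLucas

variable {F L : ℤ → ℤ}

lemma lucas_eq_fib_succ_add_fib_pred (hF : IsFibLike F) (hF0 : F 0 = 0) (hF1 : F 1 = 1)
    (hL : IsFibLike L) (hL0 : L 0 = 2) (hL1 : L 1 = 1) (n : ℤ) :
    L n = F (n + 1) + F (n - 1) := by
  have hFm1 : F (-1) = 1 := by
    have h := hF 1
    norm_num [hF0, hF1] at h
    exact h.symm
  have hF2 : F 2 = 1 := by simpa [hF0, hF1] using hF.apply_add_one 1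
  refine congrFun (hL.ext ((hF.comp_add_const 1).add (hF.comp_add_const (-1))) ?_ ?_) n
  · simp [hL0, hF1, hFm1]
  · norm_num [hL1, hF2, hF0]

lemma lucas_succ_add_lucas_pred (hF : IsFibLike F) (hF0 : F 0 = 0) (hF1 : F 1 = 1)
    (hL : IsFibLike L) (hL0 : L 0 = 2) (hL1 : L 1 = 1) (m : ℤ) :
    L (m + 1) + L (m - 1) = 5 * F m := by
  have hLF := lucas_eq_fib_succ_add_fib_pred hF hF0 hF1 hL hL0 hL1
  simp only [hLF, add_sub_cancel_right, sub_add_cancel, add_assoc, sub_sub, one_add_one_eq_two]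
  linear_combination hF.apply_add_two m + hF.apply_add_one m - hF m

theorem five_mul_fib_mul_fib_mul_fib (hF : IsFibLike F) (hF0 : F 0 = 0) (hF1 : F 1 = 1)
    (hL : IsFibLike L) (hL0 : L 0 = 2) (hL1 : L 1 = 1) (a b c : ℤ) :
    5 * F a * F b * F c
      = F (a + b + c) - (-1 : ℤ) ^ a.natAbs * F (b + c - a)
        - (-1 : ℤ) ^ c.natAbs * L (b - c) * F a := by
  have hFF := hF.apply_add_sub_neg_one_pow_mul_apply_sub hF0 hF1 hF (b + c) a
  have hLL := hF.apply_add_sub_neg_one_pow_mul_apply_sub hF0 hF1 hL b c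
  rw [← lucas_eq_fib_succ_add_fib_pred hF hF0 hF1 hL hL0 hL1, ← add_assoc] at hFF
  rw [lucas_succ_add_lucas_pred hF hF0 hF1 hL hL0 hL1, add_comm c] at hLL
  linear_combination -hFF - F a * hLL

end FibonacciLucas

theorem stmt19 (F : ℤ → ℤ) (hF0 : F 0 = 0) (hF1 : F 1 = 1)
    (hF : ∀ j : ℤ, F j = F (j - 1) + F (j - 2)) (L : ℤ → ℤ) (hL0 : L 0 = 2) (hL1 : L 1 = 1)
    (hL : ∀ j : ℤ, L j = L (j - 1) + L (j - 2)) (k r s t : ℤ) :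
    5 * F (k + r) * F (k + s) * F (k + t)
      = F (3 * k + r + s + t) - (-1 : ℤ) ^ (k + r).natAbs * F (k + s + t - r)
        - (-1 : ℤ) ^ (k + t).natAbs * L (s - t) * F (k + r) := by
  rw [show 3 * k + r + s + t = (k + r) + (k + s) + (k + t) by ring,
    show k + s + t - r = (k + s) + (k + t) - (k + r) by ring,
    show s - t = (k + s) - (k + t) by ring]
  exact five_mul_fib_mul_fib_mul_fib hF hF0 hF1 hL hL0 hL1 (k + r) (k + s) (k + t)
end
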